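/- arXiv:1807.07710 — 3 statements merged into one kernel-verified Lean document; each statement's English description precedes it below -/
import Mathlib

section
/- Let p be a prime, l ≥ 2, and f ∈ (Z/p^l Z)[x]. Then f induces a bijection of Z/p^l Z onto itself if and only if (a) the reduction of f mod p induces a bijection of Z/pZ, and (b) the formal derivative f'(x) is nonzero mod p for every x ∈ Z/p^l Z. -/
/-- For a prime `p`, `l ≥ 2` and `f ∈ (ZMod p^l)[x]`: `f` induces a bijection of
`ZMod (p^l)` iff its reduction mod `p` induces a bijection of `ZMod p` and its formal
derivative is nonzero mod `p` everywhere. -/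
theorem stmt_2 (p l : ℕ) (hp : p.Prime) (hl : 2 ≤ l)
    (f : Polynomial (ZMod (p ^ l))) :
    Function.Bijective (fun x : ZMod (p ^ l) => f.eval x) ↔
      (Function.Bijective (fun x : ZMod p =>
          (f.map (ZMod.castHom
            (show (p : ℕ) ∣ p ^ l from dvd_pow_self p (by omega)) (ZMod p))).eval x) ∧
        ∀ x : ZMod (p ^ l),
          ZMod.castHom (show (p : ℕ) ∣ p ^ l from dvd_pow_self p (by omega)) (ZMod p)
            (f.derivative.eval x) ≠ 0) := by
  haveI : Fact p.Prime := ⟨hp⟩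
  haveI : NeZero (p ^ l) := ⟨pow_ne_zero _ hp.ne_zero⟩
  set φ := ZMod.castHom (show (p : ℕ) ∣ p ^ l from dvd_pow_self p (by omega)) (ZMod p) with hφ
  -- φ of eval
  have hmapeval : ∀ x : ZMod (p ^ l),
      (f.map φ).eval (φ x) = φ (f.eval x) := by
    intro x
    rw [Polynomial.eval_map, Polynomial.eval₂_hom]
  -- characterization of kernel of φ
  have hker : ∀ a : ZMod (p ^ l), φ a = 0 → ∃ c : ZMod (p ^ l), a = p * c := by
    intro a ha
    have hv : (a.val : ZMod p) = 0 := by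
      rwa [ZMod.natCast_val, ← ZMod.castHom_apply (h := dvd_pow_self p (show l ≠ 0 by omega))]
    rw [ZMod.natCast_eq_zero_iff] at hv
    obtain ⟨c, hc⟩ := hv
    refine ⟨(c : ZMod (p ^ l)), ?_⟩
    have := ZMod.natCast_zmod_val a
    rw [← this, hc]
    push_cast
    ring
  -- units
  have hunit : ∀ a : ZMod (p ^ l), φ a ≠ 0 → IsUnit a := by
    intro a ha
    have hv : ¬ (p ∣ a.val) := by
      rw [← ZMod.natCast_eq_zero_iff]
      intro h
      apply ha
      rwa [ZMod.natCast_val, ← ZMod.castHom_apply (h := dvd_pow_self p (show l ≠ 0 by omega))] at h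
    have : IsUnit ((a.val : ℕ) : ZMod (p ^ l)) := by
      rw [ZMod.isUnit_iff_coprime]
      exact ((Nat.Prime.coprime_iff_not_dvd hp).mpr hv).symm.pow_right l
    rwa [ZMod.natCast_zmod_val] at this
  -- p^(l-1) facts
  have hppow : ((p : ZMod (p ^ l)) ^ l = 0) := by
    rw [← Nat.cast_pow, ZMod.natCast_eq_zero_iff]
  have hd0 : ((p : ZMod (p ^ l)) ^ (l - 1) ≠ 0) := by
    intro h
    rw [← Nat.cast_pow, ZMod.natCast_eq_zero_iff] at h
    exact absurd (Nat.le_of_dvd (pow_pos hp.pos _) h)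
      (not_le.mpr (Nat.pow_lt_pow_right hp.one_lt (by omega)))
  constructor
  · intro hb
    constructor
    · -- mod p map is surjective, hence bijective
      rw [← Finite.surjective_iff_bijective]
      intro y
      obtain ⟨x, hx⟩ := hb.surjective ((y.val : ZMod (p ^ l)))
      refine ⟨φ x, ?_⟩
      simp only [hmapeval, hx]
      rw [map_natCast, ZMod.natCast_zmod_val]
    · -- derivative condition
      intro x hx
      obtain ⟨c, hc⟩ := hker _ hx
      obtain ⟨k, hk⟩ := f.binomExpansion x ((p : ZMod (p ^ l)) ^ (l - 1))
      have heq : f.eval (x + (p : ZMod (p ^ l)) ^ (l - 1)) = f.eval x := by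
        rw [hk, hc]
        have h1 : (p : ZMod (p ^ l)) * c * (p : ZMod (p ^ l)) ^ (l - 1) = 0 := by
          have : (p : ZMod (p ^ l)) * (p : ZMod (p ^ l)) ^ (l - 1) = 0 := by
            rw [← pow_succ']
            have : l - 1 + 1 = l := by omega
            rw [this, hppow]
          calc (p : ZMod (p ^ l)) * c * (p : ZMod (p ^ l)) ^ (l - 1)
              = c * ((p : ZMod (p ^ l)) * (p : ZMod (p ^ l)) ^ (l - 1)) := by ring
            _ = 0 := by rw [this, mul_zero]
        have h2 : ((p : ZMod (p ^ l)) ^ (l - 1)) ^ 2 = 0 := by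
          rw [← pow_mul]
          have h3 : (p : ZMod (p ^ l)) ^ ((l - 1) * 2) =
              (p : ZMod (p ^ l)) ^ l * (p : ZMod (p ^ l)) ^ ((l - 1) * 2 - l) := by
            rw [← pow_add]
            congr 1
            omega
          rw [h3, hppow, zero_mul]
        rw [h1, h2, mul_zero, add_zero, add_zero]
      have := hb.injective heq
      simp only [add_eq_left] at this
      exact hd0 this
  · rintro ⟨ha, hd⟩
    rw [← Finite.injective_iff_bijective]
    intro x y hxy
    simp only at hxy
    -- reductions mod p are equal
    have h1 : φ x = φ y := by
      apply ha.injective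
      simp only [hmapeval, hxy]
    have h2 : φ (y - x) = 0 := by rw [map_sub, h1, sub_self]
    obtain ⟨c, hc⟩ := hker _ h2
    obtain ⟨k, hk⟩ := f.binomExpansion x (y - x)
    rw [add_sub_cancel, hxy] at hk
    have h3 : (y - x) * (f.derivative.eval x + k * (y - x)) = 0 := by
      linear_combination -hk
    have hu : IsUnit (f.derivative.eval x + k * (y - x)) := by
      apply hunit
      rw [map_add, map_mul, h2, mul_zero, add_zero]
      exact hd x
    have h5 : y - x = 0 := (hu.mul_left_eq_zero).mp h3
    exact (sub_eq_zero.mp h5).symm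
end

section
/- Let p be a prime, l ≥ 1, s a positive divisor of p−1, and define h(x) = x^{s p^{l−1}} on Z/p^l Z. If x, y ∈ Z/p^l Z satisfy h(x) ≠ h(y), then h(y) − h(x) is a unit of Z/p^l Z. -/
/-!
Write `f : ZMod (p ^ l) → ZMod p` for reduction mod `p`; an element is a unit exactly when its
image under `f` is nonzero. By Fermat, `f (x ^ (s * p ^ (l - 1))) = f (x ^ s)`, so if
`h y - h x` is not a unit then `x ^ s ≡ y ^ s [mod p]`. Raising a congruence mod `p` to the
power `p ^ (l - 1)` lifts it to a congruence mod `p ^ l`, hence `h x = h y`.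
-/

namespace ZMod

theorem natCast_dvd_of_castHom_eq_zero {n p : ℕ} [NeZero n] (h : p ∣ n) {c : ZMod n}
    (hc : castHom h (ZMod p) c = 0) : (p : ZMod n) ∣ c := by
  rw [← natCast_zmod_val c, map_natCast, natCast_eq_zero_iff] at hc
  obtain ⟨m, hm⟩ := hc
  exact ⟨m, by rw [← natCast_zmod_val c, hm, Nat.cast_mul]⟩

theorem castHom_pow_prime_pow {n p : ℕ} [Fact p.Prime] (h : p ∣ n) (a : ZMod n) (m : ℕ) :
    castHom h (ZMod p) (a ^ p ^ m) = castHom h (ZMod p) a := by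
  rw [map_pow, pow_card_pow]

variable {p l : ℕ} [Fact p.Prime] (hl : l ≠ 0)
include hl

theorem isUnit_iff_castHom_ne_zero (c : ZMod (p ^ l)) :
    IsUnit c ↔ castHom (dvd_pow_self p hl) (ZMod p) c ≠ 0 := by
  rw [← natCast_zmod_val c, map_natCast, isUnit_natCast_iff_not_dvd_pow Fact.out
    (Nat.pos_of_ne_zero hl), Ne, natCast_eq_zero_iff]

theorem pow_prime_pow_eq_of_castHom_eq {a b : ZMod (p ^ l)}
    (hab : castHom (dvd_pow_self p hl) (ZMod p) a = castHom (dvd_pow_self p hl) (ZMod p) b) :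
    a ^ p ^ (l - 1) = b ^ p ^ (l - 1) := by
  have hdvd : (p : ZMod (p ^ l)) ∣ a - b :=
    natCast_dvd_of_castHom_eq_zero _ (by rw [map_sub, hab, sub_self])
  have hlift := dvd_sub_pow_of_dvd_sub hdvd (l - 1)
  rwa [Nat.sub_add_cancel (Nat.pos_of_ne_zero hl), ← Nat.cast_pow, natCast_self, zero_dvd_iff,
    sub_eq_zero] at hlift

end ZMod

theorem stmt_10_general (p l s : ℕ) (hp : p.Prime) (hl : 1 ≤ l)
    (x y : ZMod (p ^ l))
    (hxy : x ^ (s * p ^ (l - 1)) ≠ y ^ (s * p ^ (l - 1))) :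
    IsUnit (y ^ (s * p ^ (l - 1)) - x ^ (s * p ^ (l - 1))) := by
  have : Fact p.Prime := ⟨hp⟩
  have hl₀ : l ≠ 0 := Nat.one_le_iff_ne_zero.mp hl
  by_contra hnu
  rw [ZMod.isUnit_iff_castHom_ne_zero hl₀, not_not, map_sub, sub_eq_zero, pow_mul, pow_mul,
    ZMod.castHom_pow_prime_pow, ZMod.castHom_pow_prime_pow] at hnu
  rw [pow_mul, pow_mul, ZMod.pow_prime_pow_eq_of_castHom_eq hl₀ hnu] at hxy
  exact hxy rfl

/-- For a prime `p`, `l ≥ 1`, `s ∣ p - 1`, `s > 0` and `h x = x^(s·p^(l-1))` on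
`ZMod (p^l)`: if `h x ≠ h y` then `h y - h x` is a unit. -/
theorem stmt_10 (p l s : ℕ) (hp : p.Prime) (hl : 1 ≤ l)
    (hs : 0 < s) (hsd : s ∣ p - 1) (x y : ZMod (p ^ l))
    (hxy : x ^ (s * p ^ (l - 1)) ≠ y ^ (s * p ^ (l - 1))) :
    IsUnit (y ^ (s * p ^ (l - 1)) - x ^ (s * p ^ (l - 1))) :=
  stmt_10_general p l s hp hl x y hxy
end

section
/- Let p be a prime, l ≥ 1 and s a positive divisor of p−1. Then the image {x^{s p^{l−1}} : x ∈ Z/p^l Z} has exactly k = 1 + (p−1)/s elements. -/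
/-!
Since `a ≡ b (mod p)` implies `a ^ p ^ (l-1) = b ^ p ^ (l-1)` in `ZMod (p ^ l)`, the map
`x ↦ x ^ p ^ (l-1)` factors through reduction mod `p` as `x ↦ ω (x mod p)`, where the Teichmüller
lift `ω z = ẑ ^ p ^ (l-1)` is injective because it is a section of the reduction (Fermat).
So the image of `x ↦ x ^ (s p^(l-1))` is in bijection with the set of `s`-th powers in `ZMod p`:
`0` together with the subgroup of index `s` of the cyclic group `(ZMod p)ˣ`.
-/

open Set

theorem range_pow_eq_insert_zero_image_units {G₀ : Type*} [CommGroupWithZero G₀] {n : ℕ}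
    (hn : n ≠ 0) :
    range (fun x : G₀ => x ^ n) =
      insert 0 (Units.val '' ((powMonoidHom n : G₀ˣ →* G₀ˣ).range : Set G₀ˣ)) := by
  ext y
  constructor
  · rintro ⟨x, rfl⟩
    rcases eq_or_ne x 0 with rfl | hx
    · exact .inl (zero_pow hn)
    · exact .inr ⟨Units.mk0 x hx ^ n, ⟨_, rfl⟩, by simp⟩
  · rintro (rfl | ⟨-, ⟨u, rfl⟩, rfl⟩)
    · exact ⟨0, zero_pow hn⟩
    · exact ⟨u, by simp⟩

theorem card_range_pow {G₀ : Type*} [CommGroupWithZero G₀] [Finite G₀] [IsCyclic G₀ˣ] {n : ℕ}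
    (hn : n ≠ 0) :
    Nat.card (range fun x : G₀ => x ^ n) =
      1 + (Nat.card G₀ - 1) / (Nat.card G₀ - 1).gcd n := by
  rw [range_pow_eq_insert_zero_image_units hn, Nat.card_coe_set_eq,
    ncard_insert_of_notMem (by simp), ← Nat.card_coe_set_eq,
    Nat.card_image_of_injective Units.val_injective, SetLike.coe_sort_coe,
    IsCyclic.card_powMonoidHom_range, Nat.card_units, add_comm]

theorem pow_pow_eq_of_dvd_sub {R : Type*} [CommRing R] {p k : ℕ}
    (hR : (p : R) ^ (k + 1) = 0) {a b : R} (h : (p : R) ∣ a - b) : a ^ p ^ k = b ^ p ^ k := by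
  simpa [hR, sub_eq_zero] using dvd_sub_pow_of_dvd_sub h k

theorem ZMod.natCast_dvd_sub_of_castHom_eq {m n : ℕ} [NeZero n] (hmn : m ∣ n) {a b : ZMod n}
    (h : ZMod.castHom hmn (ZMod m) a = ZMod.castHom hmn (ZMod m) b) : (m : ZMod n) ∣ a - b := by
  obtain ⟨c, hc⟩ : m ∣ (a - b).val := by
    rw [← ZMod.natCast_eq_zero_iff, ZMod.natCast_val]
    exact (map_sub (ZMod.castHom hmn (ZMod m)) a b).trans (by rw [h, sub_self])
  exact ⟨c, by rw [← ZMod.natCast_zmod_val (a - b), hc, Nat.cast_mul]⟩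

theorem ZMod.pow_pow_eq_of_castHom_eq {p k : ℕ} [NeZero p] {a b : ZMod (p ^ (k + 1))}
    (h : ZMod.castHom (dvd_pow_self p k.add_one_ne_zero) (ZMod p) a =
      ZMod.castHom (dvd_pow_self p k.add_one_ne_zero) (ZMod p) b) :
    a ^ p ^ k = b ^ p ^ k :=
  pow_pow_eq_of_dvd_sub (by rw [← Nat.cast_pow, ZMod.natCast_self])
    (ZMod.natCast_dvd_sub_of_castHom_eq _ h)

theorem ZMod.card_range_pow_mul_prime_pow {p : ℕ} [Fact p.Prime] (k n : ℕ) :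
    Nat.card (range fun x : ZMod (p ^ (k + 1)) => x ^ (n * p ^ k)) =
      Nat.card (range fun y : ZMod p => y ^ n) := by
  set π := ZMod.castHom (dvd_pow_self p k.add_one_ne_zero) (ZMod p)
  set ω : ZMod p → ZMod (p ^ (k + 1)) := fun z => (z.val : ZMod (p ^ (k + 1))) ^ p ^ k
  have hπω : ∀ z, π (ω z) = z := fun z => by
    simp only [ω, map_pow, map_natCast, ZMod.natCast_zmod_val, ZMod.pow_card_pow]
  have hω : ∀ x, x ^ p ^ k = ω (π x) := fun x =>
    ZMod.pow_pow_eq_of_castHom_eq (by rw [map_natCast, ZMod.natCast_zmod_val])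
  have hrange : (range fun x : ZMod (p ^ (k + 1)) => x ^ (n * p ^ k)) =
      ω '' range fun y : ZMod p => y ^ n := by
    simp_rw [pow_mul, hω, map_pow]
    exact ((ZMod.castHom_surjective _).range_comp fun y => ω (y ^ n)).trans (range_comp' ω _)
  rw [hrange, Nat.card_image_of_injective (Function.LeftInverse.injective hπω)]

/-- For a prime `p`, `l ≥ 1` and a positive divisor `s` of `p - 1`, the image of
`x ↦ x^(s·p^(l-1))` on `ZMod (p^l)` has exactly `1 + (p-1)/s` elements. -/
theorem stmt_11 (p l s : ℕ) (hp : p.Prime) (hl : 1 ≤ l)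
    (hs : 0 < s) (hsd : s ∣ p - 1) :
    Nat.card (Set.range fun x : ZMod (p ^ l) => x ^ (s * p ^ (l - 1))) =
      1 + (p - 1) / s := by
  have := Fact.mk hp
  obtain ⟨k, rfl⟩ : ∃ k, l = k + 1 := ⟨l - 1, by omega⟩
  rw [Nat.add_sub_cancel, ZMod.card_range_pow_mul_prime_pow, card_range_pow hs.ne', Nat.card_zmod,
    Nat.gcd_eq_right hsd]
end
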